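/- Let n ≥ 2 and define X_k, Xₙ as polynomials on the upper half-space {xₙ > 0} ⊂ ℝⁿ as in the previous context, with 1-form ω = Σᵢ (Xᵢ/xₙ²)dxᵢ. Then the Lie derivative L_X ω = d(i_Xω) + i_X(dω) vanishes identically, where i_Xω = S/xₙ² with S = ΣX_k². -/

import Mathlib

/-!
Eliminating the sums over `j ≠ k` gives `X_k = H x_k - (a_k/2)(|x|² + xₙ²) + c_k` and
`Xₙ = H xₙ` with `H = Σ a_k x_k + b`, so that `∂_m X_k = a_m x_k - a_k x_m + δ_{km} H`,
`∂_m Xₙ = a_m xₙ`, `∂ₙ X_k = -a_k xₙ` and `∂ₙ Xₙ = H`. Differentiating `S / xₙ²` with these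
formulas, each component of `d(i_X ω)` is exactly the negative of the corresponding component
of `i_X(dω)`.
-/

open scoped BigOperators

noncomputable def Hfun {N : ℕ} (a : Fin N → ℝ) (b : ℝ) (x : Fin N → ℝ) : ℝ :=
  (∑ k, a k * x k) + b

-- `N = n - 1`, and `y` stands for the last coordinate `xₙ`.
noncomputable def Xcomp {N : ℕ} (a : Fin N → ℝ) (b : ℝ) (c : Fin N → ℝ) (k : Fin N)
    (x : Fin N → ℝ) (y : ℝ) : ℝ :=
  a k / 2 * (x k ^ 2 - ((∑ j ∈ Finset.univ.erase k, x j ^ 2) + y ^ 2)) +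
    ((∑ i ∈ Finset.univ.erase k, a i * x i) + b) * x k + c k

noncomputable def Xlast {N : ℕ} (a : Fin N → ℝ) (b : ℝ) (x : Fin N → ℝ) (y : ℝ) : ℝ :=
  Hfun a b x * y

noncomputable def iXw {N : ℕ} (a : Fin N → ℝ) (b : ℝ) (c : Fin N → ℝ)
    (x : Fin N → ℝ) (y : ℝ) : ℝ :=
  ((∑ k, Xcomp a b c k x y ^ 2) + Xlast a b x y ^ 2) / y ^ 2

open Function

lemma HasDerivAt.fun_sum_sq {ι : Type*} {s : Finset ι} {f : ι → ℝ → ℝ} {f' : ι → ℝ} {t : ℝ}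
    (h : ∀ i ∈ s, HasDerivAt (f i) (f' i) t) :
    HasDerivAt (fun u => ∑ i ∈ s, f i u ^ 2) (∑ i ∈ s, 2 * f i t * f' i) t := by
  refine HasDerivAt.fun_sum fun i hi => ?_
  simpa [mul_comm] using (h i hi).fun_pow 2

lemma hasDerivAt_update_apply {ι : Type*} [DecidableEq ι] (x : ι → ℝ) (m k : ι) (t : ℝ) :
    HasDerivAt (fun s => update x m s k) ((Pi.single m 1 : ι → ℝ) k) t :=
  hasDerivAt_pi.1 (hasDerivAt_update x m t) k

section

variable {N : ℕ} (a : Fin N → ℝ) (b : ℝ) (c : Fin N → ℝ) (x : Fin N → ℝ)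

lemma Xcomp_eq_Hfun_mul (k : Fin N) (y : ℝ) :
    Xcomp a b c k x y = Hfun a b x * x k - a k / 2 * ((∑ j, x j ^ 2) + y ^ 2) + c k := by
  unfold Xcomp Hfun
  rw [Finset.sum_erase_eq_sub (Finset.mem_univ k), Finset.sum_erase_eq_sub (Finset.mem_univ k)]
  ring

lemma hasDerivAt_Hfun_update (m : Fin N) (t : ℝ) :
    HasDerivAt (fun s => Hfun a b (update x m s)) (a m) t := by
  have h := (HasDerivAt.fun_sum fun k (_ : k ∈ Finset.univ) =>
    (hasDerivAt_update_apply x m k t).const_mul (a k)).add_const b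
  simpa [Hfun, Pi.single_apply] using h

lemma hasDerivAt_sum_sq_update (m : Fin N) :
    HasDerivAt (fun s => ∑ j, update x m s j ^ 2) (2 * x m) (x m) := by
  have h := HasDerivAt.fun_sum_sq fun j (_ : j ∈ Finset.univ) =>
    hasDerivAt_update_apply x m j (x m)
  simpa [Pi.single_apply] using h

lemma hasDerivAt_Xcomp_update (k m : Fin N) (y : ℝ) :
    HasDerivAt (fun s => Xcomp a b c k (update x m s) y)
      (a m * x k + Hfun a b x * (Pi.single m 1 : Fin N → ℝ) k - a k * x m) (x m) := by
  simp_rw [Xcomp_eq_Hfun_mul]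
  have h := (((hasDerivAt_Hfun_update a b x m (x m)).fun_mul
    (hasDerivAt_update_apply x m k (x m))).fun_sub (((hasDerivAt_sum_sq_update x m).add_const (y ^ 2)).const_mul (a k / 2))).add_const (c k)
  rw [update_eq_self] at h
  exact h.congr_deriv (by ring)

lemma deriv_iXw_update (m : Fin N) (y : ℝ) :
    deriv (fun s => iXw a b c (update x m s) y) (x m) =
      2 / y ^ 2 * (Hfun a b x * (Xcomp a b c m x y + a m * y ^ 2) -
        ∑ k, (a k * x m - a m * x k) * Xcomp a b c k x y) := by
  have hXlast : HasDerivAt (fun s => Xlast a b (update x m s) y) (a m * y) (x m) :=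
    (hasDerivAt_Hfun_update a b x m (x m)).mul_const y
  have h := ((HasDerivAt.fun_sum_sq fun k (_ : k ∈ Finset.univ) =>
    hasDerivAt_Xcomp_update a b c x k m y).fun_add (hXlast.fun_pow 2)).div_const (y ^ 2)
  rw [update_eq_self] at h
  have hsum : ∑ k, 2 * Xcomp a b c k x y *
        (a m * x k + Hfun a b x * (Pi.single m 1 : Fin N → ℝ) k - a k * x m) =
      2 * Hfun a b x * Xcomp a b c m x y -
        2 * ∑ k, (a k * x m - a m * x k) * Xcomp a b c k x y := by
    have hterm : ∀ k, 2 * Xcomp a b c k x y *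
          (a m * x k + Hfun a b x * (Pi.single m 1 : Fin N → ℝ) k - a k * x m) =
        (if k = m then 2 * Hfun a b x * Xcomp a b c k x y else 0) -
          2 * ((a k * x m - a m * x k) * Xcomp a b c k x y) := by
      intro k
      rw [Pi.single_apply]
      split_ifs <;> ring
    simp only [hterm, Finset.sum_sub_distrib, Finset.mul_sum, Finset.sum_ite_eq', Finset.mem_univ,
      if_true]
  unfold iXw
  rw [h.deriv, hsum, Xlast]
  ring

lemma hasDerivAt_Xcomp_right (k : Fin N) (y : ℝ) :
    HasDerivAt (fun s => Xcomp a b c k x s) (-(a k * y)) y := by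
  simp_rw [Xcomp_eq_Hfun_mul]
  have h := ((((hasDerivAt_pow 2 y).const_add (∑ j, x j ^ 2)).const_mul (a k / 2)).const_sub
    (Hfun a b x * x k)).add_const (c k)
  exact h.congr_deriv (by ring)

lemma deriv_iXw_right {y : ℝ} (hy : y ≠ 0) :
    deriv (fun s => iXw a b c x s) y =
      -(2 / y ^ 3) * ∑ k, (Xcomp a b c k x y + a k * y ^ 2) * Xcomp a b c k x y := by
  have hXlast : HasDerivAt (fun s => Xlast a b x s) (Hfun a b x) y :=
    hasDerivAt_const_mul (Hfun a b x)
  have h := ((HasDerivAt.fun_sum_sq fun k (_ : k ∈ Finset.univ) =>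
    hasDerivAt_Xcomp_right a b c x k y).fun_add (hXlast.fun_pow 2)).fun_div
      (hasDerivAt_pow 2 y) (pow_ne_zero 2 hy)
  have hsum : ∑ k, 2 * Xcomp a b c k x y * -(a k * y) =
      -(2 * y) * ∑ k, a k * Xcomp a b c k x y := by
    rw [Finset.mul_sum]
    exact Finset.sum_congr rfl fun k _ => by ring
  have hsq : ∑ k, (Xcomp a b c k x y + a k * y ^ 2) * Xcomp a b c k x y =
      ∑ k, Xcomp a b c k x y ^ 2 + y ^ 2 * ∑ k, a k * Xcomp a b c k x y := by
    rw [Finset.mul_sum, ← Finset.sum_add_distrib]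
    exact Finset.sum_congr rfl fun k _ => by ring
  unfold iXw
  rw [h.deriv, hsum, hsq, Xlast]
  field_simp
  ring

end

theorem stmt16_general (N : ℕ) (a : Fin N → ℝ) (b : ℝ) (c : Fin N → ℝ)
    (x : Fin N → ℝ) (y : ℝ) (hy : 0 < y) :
    (∀ m : Fin N,
      deriv (fun s => iXw a b c (Function.update x m s) y) (x m) +
        ((2 / y ^ 2) *
            (∑ k ∈ Finset.univ.erase m, (a k * x m - a m * x k) * Xcomp a b c k x y) -
          (2 * (Xcomp a b c m x y + a m * y ^ 2) / y ^ 3) * Xlast a b x y) = 0) ∧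
    deriv (fun s => iXw a b c x s) y +
      (∑ i, (2 * (Xcomp a b c i x y + a i * y ^ 2) / y ^ 3) * Xcomp a b c i x y) = 0 := by
  refine ⟨fun m => ?_, ?_⟩
  · rw [deriv_iXw_update, Finset.sum_erase _ (by ring), Xlast]
    generalize ∑ k, (a k * x m - a m * x k) * Xcomp a b c k x y = S
    field_simp
    ring
  · rw [deriv_iXw_right a b c x hy.ne', Finset.mul_sum, ← Finset.sum_add_distrib]
    exact Finset.sum_eq_zero fun k _ => by ring

/-- `L_X ω = d(i_Xω) + i_X(dω) = 0` on the half-space `{xₙ > 0}`: with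
`dω = Σ_{i<j≤n−1}(2(a_ix_j − a_jx_i)/xₙ²)dxᵢ∧dxⱼ + Σ_{i≤n−1}(2(Xᵢ + aᵢxₙ²)/xₙ³)dxᵢ∧dxₙ`,
the `dx_m`-component of `i_X(dω)` is
`(2/xₙ²)Σ_{k≠m}(a_kx_m − a_mx_k)X_k − (2(X_m + a_mxₙ²)/xₙ³)Xₙ` and the
`dxₙ`-component is `Σᵢ (2(Xᵢ + aᵢxₙ²)/xₙ³)Xᵢ`; every component of `L_X ω` vanishes. -/
theorem stmt16 (N : ℕ) (hN : 1 ≤ N) (a : Fin N → ℝ) (b : ℝ) (c : Fin N → ℝ)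
    (x : Fin N → ℝ) (y : ℝ) (hy : 0 < y) :
    (∀ m : Fin N,
      deriv (fun s => iXw a b c (Function.update x m s) y) (x m) +
        ((2 / y ^ 2) *
            (∑ k ∈ Finset.univ.erase m, (a k * x m - a m * x k) * Xcomp a b c k x y) -
          (2 * (Xcomp a b c m x y + a m * y ^ 2) / y ^ 3) * Xlast a b x y) = 0) ∧
    deriv (fun s => iXw a b c x s) y +
      (∑ i, (2 * (Xcomp a b c i x y + a i * y ^ 2) / y ^ 3) * Xcomp a b c i x y) = 0 :=
  stmt16_general N a b c x y hy
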